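/- The RK3-Fourier spectral method for the convection equation is stable exactly up to θ² = 3: for θ ∈ ℝ, |1 - iθ - θ²/2 + iθ³/6| ≤ 1 if and only if θ² ≤ 3 (equivalently |θ| ≤ √3). -/

import Mathlib

open Complex

/-!
Along the imaginary axis the amplification factor splits as `G = (1 - θ²/2) + i (θ³/6 - θ)`,
and the `θ²` terms of `|G|² = (1 - θ²/2)² + (θ³/6 - θ)²` cancel, leaving
`|G|² = 1 + θ⁴ (θ² - 3) / 36`.
-/

noncomputable def rk3StabilityFunction (z : ℂ) : ℂ := 1 + z + z ^ 2 / 2 + z ^ 3 / 6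

theorem rk3StabilityFunction_neg_mul_I (θ : ℝ) :
    rk3StabilityFunction (-θ * I) = ((1 - θ ^ 2 / 2 : ℝ) : ℂ) + ((θ ^ 3 / 6 - θ : ℝ) : ℂ) * I := by
  unfold rk3StabilityFunction
  push_cast
  ring_nf
  rw [I_sq, I_pow_three]
  ring

theorem normSq_rk3StabilityFunction_neg_mul_I (θ : ℝ) :
    normSq (rk3StabilityFunction (-θ * I)) = 1 + θ ^ 4 * (θ ^ 2 - 3) / 36 := by
  rw [rk3StabilityFunction_neg_mul_I, normSq_add_mul_I]
  ring

theorem norm_le_one_iff_normSq_le_one (z : ℂ) : ‖z‖ ≤ 1 ↔ normSq z ≤ 1 := by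
  rw [← Complex.sq_norm, sq_le_one_iff₀ (norm_nonneg z)]

theorem norm_rk3StabilityFunction_neg_mul_I_le_one_iff (θ : ℝ) :
    ‖rk3StabilityFunction (-θ * I)‖ ≤ 1 ↔ θ ^ 2 ≤ 3 := by
  rw [norm_le_one_iff_normSq_le_one, normSq_rk3StabilityFunction_neg_mul_I,
    add_le_iff_nonpos_right, mul_div_right_comm]
  rcases eq_or_ne θ 0 with rfl | hθ
  · norm_num
  · have hθ4 : 0 < θ ^ 4 / 36 := by positivity
    rw [← mul_zero (θ ^ 4 / 36), mul_le_mul_iff_of_pos_left hθ4, sub_nonpos]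

/-- The RK3-Fourier spectral method for the convection equation is stable exactly
up to `θ² = 3`: `|1 - iθ - θ²/2 + iθ³/6| ≤ 1 ↔ θ² ≤ 3`. -/
theorem rk3_convection_stability_iff (θ : ℝ) :
    ‖(1 - (θ : ℂ) * I - (θ : ℂ) ^ 2 / 2 + (θ : ℂ) ^ 3 * I / 6)‖ ≤ 1 ↔
      θ ^ 2 ≤ 3 := by
  convert norm_rk3StabilityFunction_neg_mul_I_le_one_iff θ using 3
  unfold rk3StabilityFunction
  ring_nf
  rw [I_sq, I_pow_three]
  ring
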